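/- arXiv:1411.3318 — 4 statements merged into one kernel-verified Lean document; each statement's English description precedes it below -/
import Mathlib

section
/- Let F'/F be a field extension, A an F-algebra, and 0 → X → Y → Z → 0 a short exact sequence of A-modules. The sequence splits over F if and only if the base-changed sequence 0 → X⊗_F F' → Y⊗_F F' → Z⊗_F F' → 0 of A⊗_F F'-modules splits over F'. -/
/-!
An `A`-linear section `s` of `g` base-changes to the `F'`-linear section `id ⊗ s`, which commutes
with the `A`-action. Conversely, since `F` is a field there is an `F`-linear functional
`π : F' → F` with `π 1 = 1`. Contracting with `π` is a natural `F`-linear map `F' ⊗ M → M`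
retracting `m ↦ 1 ⊗ m`, so `z ↦ (π ⊗ id) (s' (1 ⊗ z))` is an `A`-linear section of `g`
whenever `s'` is an `A`-equivariant section of `id ⊗ g`.
-/

open scoped TensorProduct

namespace TensorProduct

variable {R S M N : Type*} [CommSemiring R] [AddCommMonoid S] [Module R S]
  [AddCommMonoid M] [Module R M] [AddCommMonoid N] [Module R N]

def contractAlong (π : S →ₗ[R] R) : S ⊗[R] M →ₗ[R] M :=
  (TensorProduct.lid R M).toLinearMap ∘ₗ π.rTensor M

@[simp]
theorem contractAlong_tmul (π : S →ₗ[R] R) (c : S) (m : M) :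
    contractAlong π (c ⊗ₜ[R] m) = π c • m := by
  simp [contractAlong]

theorem contractAlong_one_tmul [One S] {π : S →ₗ[R] R} (hπ : π 1 = 1) (m : M) :
    contractAlong π ((1 : S) ⊗ₜ[R] m) = m := by
  rw [contractAlong_tmul, hπ, one_smul]

theorem contractAlong_lTensor (π : S →ₗ[R] R) (φ : M →ₗ[R] N) (v : S ⊗[R] M) :
    contractAlong π (φ.lTensor S v) = φ (contractAlong π v) := by
  induction v using TensorProduct.induction_on with
  | zero => simp
  | tmul c m => simp
  | add u v hu hv => simp [hu, hv]

end TensorProduct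

theorem Algebra.exists_linearMap_map_one_eq_one (K L : Type*) [Field K] [Ring L] [Nontrivial L]
    [Algebra K L] : ∃ π : L →ₗ[K] K, π 1 = 1 := by
  obtain ⟨π, hπ⟩ := (Algebra.linearMap K L).exists_leftInverse_of_injective
    (LinearMap.ker_eq_bot.mpr (FaithfulSMul.algebraMap_injective K L))
  exact ⟨π, by simpa using LinearMap.congr_fun hπ 1⟩

namespace LinearMap

open TensorProduct

variable {R S A M N : Type*} [CommSemiring R] [Semiring S] [Algebra R S] [Semiring A] [Algebra R A]
  [AddCommMonoid M] [Module R M] [Module A M] [IsScalarTower R A M]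
  [AddCommMonoid N] [Module R N] [Module A N] [IsScalarTower R A N]

theorem baseChange_restrictScalars_lTensor_toLinearMap (φ : M →ₗ[A] N) (a : A)
    (v : S ⊗[R] M) :
    (φ.restrictScalars R).baseChange S ((DistribSMul.toLinearMap R M a).lTensor S v) =
      (DistribSMul.toLinearMap R N a).lTensor S ((φ.restrictScalars R).baseChange S v) := by
  simp only [baseChange_eq_ltensor, ← comp_apply, ← lTensor_comp]
  congr 2
  ext m
  exact φ.map_smul a m

theorem exists_section_of_baseChange_section {π : S →ₗ[R] R} (hπ : π 1 = 1)
    (g : M →ₗ[A] N) (s' : S ⊗[R] N →ₗ[R] S ⊗[R] M)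
    (hs'_smul : ∀ (a : A) (v : S ⊗[R] N), s' ((DistribSMul.toLinearMap R N a).lTensor S v) =
      (DistribSMul.toLinearMap R M a).lTensor S (s' v))
    (hs' : ∀ v, (g.restrictScalars R).baseChange S (s' v) = v) :
    ∃ s : N →ₗ[A] M, g ∘ₗ s = LinearMap.id := by
  let s₀ : N →ₗ[R] M := contractAlong π ∘ₗ s' ∘ₗ TensorProduct.mk R S N 1
  refine ⟨{ toFun := s₀, map_add' := s₀.map_add, map_smul' := fun a n => ?_ }, ?_⟩
  · have h_tmul_smul :
        (1 : S) ⊗ₜ[R] (a • n) = (DistribSMul.toLinearMap R N a).lTensor S (1 ⊗ₜ n) := rfl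
    simp only [s₀, coe_comp, Function.comp_apply, mk_apply, RingHom.id_apply, h_tmul_smul,
      hs'_smul, contractAlong_lTensor, DistribSMul.toLinearMap_apply]
  · ext n
    change g (s₀ n) = n
    have hg : g (s₀ n) = contractAlong π ((g.restrictScalars R).lTensor S (s' (1 ⊗ₜ n))) :=
      (contractAlong_lTensor π (g.restrictScalars R) _).symm
    rw [hg, ← baseChange_eq_ltensor, hs', contractAlong_one_tmul hπ]

end LinearMap

theorem ses_splits_iff_baseChange_splits_general
    (F F' : Type) [Field F] [Field F'] [Algebra F F']
    (A : Type) [Ring A] [Algebra F A]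
    (Y Z : Type)
    [AddCommGroup Y] [Module F Y] [Module A Y] [IsScalarTower F A Y]
    [AddCommGroup Z] [Module F Z] [Module A Z] [IsScalarTower F A Z]
    (g : Y →ₗ[A] Z) :
    (∃ s : Z →ₗ[A] Y, g.comp s = LinearMap.id) ↔
      (∃ s' : (F' ⊗[F] Z) →ₗ[F'] (F' ⊗[F] Y),
        (∀ (a : A) (v : F' ⊗[F] Z),
          s' (LinearMap.lTensor F' (DistribMulAction.toLinearMap F Z a) v)
            = LinearMap.lTensor F' (DistribMulAction.toLinearMap F Y a) (s' v)) ∧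
        (LinearMap.baseChange F' ((g : Y →ₗ[A] Z).restrictScalars F)).comp s'
          = LinearMap.id) := by
  constructor
  · rintro ⟨s, hs⟩
    refine ⟨(s.restrictScalars F).baseChange F',
      LinearMap.baseChange_restrictScalars_lTensor_toLinearMap s, ?_⟩
    rw [← LinearMap.baseChange_comp, ← LinearMap.restrictScalars_comp, hs,
      LinearMap.restrictScalars_id, LinearMap.baseChange_id]
  · rintro ⟨s', hs'_smul, hs'⟩
    obtain ⟨π, hπ⟩ := Algebra.exists_linearMap_map_one_eq_one F F'
    exact LinearMap.exists_section_of_baseChange_section hπ g (s'.restrictScalars F) hs'_smul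
      (LinearMap.congr_fun hs')

/-- **Splitting of short exact sequences is invariant under base field extension.**
Let `F'/F` be a field extension, `A` an `F`-algebra, and `0 → X → Y → Z → 0` a short exact
sequence of `A`-modules.  The sequence splits over `F` (i.e. the surjection admits an
`A`-linear section) if and only if the base-changed sequence
`0 → X ⊗_F F' → Y ⊗_F F' → Z ⊗_F F' → 0` of `A ⊗_F F'`-modules splits over `F'`
(i.e. the base-changed surjection admits a section which is `F'`-linear and commutes with the
base-changed `A`-action). -/
theorem ses_splits_iff_baseChange_splits
    (F F' : Type) [Field F] [Field F'] [Algebra F F']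
    (A : Type) [Ring A] [Algebra F A]
    (X Y Z : Type)
    [AddCommGroup X] [Module F X] [Module A X] [IsScalarTower F A X] [SMulCommClass F A X]
    [AddCommGroup Y] [Module F Y] [Module A Y] [IsScalarTower F A Y] [SMulCommClass F A Y]
    [AddCommGroup Z] [Module F Z] [Module A Z] [IsScalarTower F A Z] [SMulCommClass F A Z]
    (f : X →ₗ[A] Y) (g : Y →ₗ[A] Z)
    (hinj : Function.Injective f) (hsurj : Function.Surjective g)
    (hexact : Function.Exact f g) :
    (∃ s : Z →ₗ[A] Y, g.comp s = LinearMap.id) ↔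
      (∃ s' : (F' ⊗[F] Z) →ₗ[F'] (F' ⊗[F] Y),
        (∀ (a : A) (v : F' ⊗[F] Z),
          s' (LinearMap.lTensor F' (DistribMulAction.toLinearMap F Z a) v)
            = LinearMap.lTensor F' (DistribMulAction.toLinearMap F Y a) (s' v)) ∧
        (LinearMap.baseChange F' ((g : Y →ₗ[A] Z).restrictScalars F)).comp s'
          = LinearMap.id) :=
  ses_splits_iff_baseChange_splits_general F F' A Y Z g
end

section
/- Let F'/F be a Galois extension of fields, A an F-algebra, and X' an A⊗_F F'-module with End_{A⊗F'}(X') = F'. If X' admits a model over F (i.e., there exists an A-module X with X ⊗_F F' ≅ X'), then this model is unique up to isomorphism. -/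
/-!
Each model `M` of `X'` gives an action `σ ↦ σ_M` of `Gal(F'/F)` on `X' ≅ F' ⊗_F M` through the
first factor: `σ_M` is `σ`-semilinear, commutes with `A`, and its fixed vectors are exactly `M`.
For two models, `σ_{M₂} ∘ σ_{M₁}⁻¹` is `A ⊗_F F'`-linear, hence a scalar `u σ` by the Schur
condition. The cocycle `u` splits explicitly (Hilbert 90): if `c` is a nonzero coordinate of some
`0 ≠ m ∈ M₁` in an `F'`-basis of `F' ⊗_F M₂`, then `u σ * c = σ c`. Hence `c⁻¹ • M₁` is fixed by
every `σ_{M₂}`, i.e. lies in `M₂`, symmetrically `c • M₂ ⊆ M₁`, and multiplication by `c⁻¹` is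
the isomorphism.
-/

open scoped TensorProduct

/-- The canonical `F`-linear map `F' ⊗_F M → X'`, `c ⊗ m ↦ c • m`, associated to an
`F`-subspace `M` of an `A ⊗_F F'`-module `X'`.  An `A`-stable subspace `M` is a *model of `X'`
over `F`* precisely when this map is bijective. -/
noncomputable def modelMap (F F' : Type) [Field F] [Field F'] [Algebra F F']
    (X' : Type) [AddCommGroup X'] [Module F X'] [Module F' X']
    [IsScalarTower F F' X'] [SMulCommClass F F' X']
    (M : Submodule F X') : (F' ⊗[F] ↥M) →ₗ[F] X' :=
  TensorProduct.lift
    (LinearMap.mk₂ F (fun (c : F') (m : ↥M) => c • (m : X'))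
      (fun a b m => by simp [add_smul])
      (fun r a m => by simp [smul_assoc])
      (fun a m₁ m₂ => by simp [smul_add])
      (fun r a m => by
        simp only [SetLike.val_smul]
        exact smul_comm a r (m : X')))

theorem baseChange_repr_rTensor {F F' ι N : Type} [Field F] [Field F'] [Algebra F F']
    [AddCommGroup N] [Module F N] (b : Module.Basis ι F N) (σ : F' ≃ₐ[F] F')
    (t : F' ⊗[F] N) (i : ι) :
    (b.baseChange F').repr (σ.toLinearEquiv.rTensor N t) i = σ ((b.baseChange F').repr t i) := by
  induction t using TensorProduct.induction_on with
  | zero => simp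
  | tmul c m =>
    rw [LinearEquiv.rTensor_tmul, Module.Basis.baseChange_repr_tmul,
      Module.Basis.baseChange_repr_tmul, AlgEquiv.toLinearEquiv_apply, map_smul]
  | add t₁ t₂ h₁ h₂ => simp only [map_add, Finsupp.add_apply, h₁, h₂]

theorem exists_linearEquiv_inv_smul {R K V : Type} [Semiring R] [Field K] [AddCommGroup V]
    [Module R V] [Module K V] [SMulCommClass K R V] {P Q : Submodule R V} {c : K} (hc : c ≠ 0)
    (h₁ : ∀ x ∈ P, c⁻¹ • x ∈ Q) (h₂ : ∀ x ∈ Q, c • x ∈ P) :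
    ∃ e : P ≃ₗ[R] Q, ∀ y : P, (e y : V) = c⁻¹ • (y : V) := by
  refine ⟨(DistribMulAction.toLinearEquiv R V (Units.mk0 c hc)⁻¹).ofSubmodules P Q ?_,
    fun y => rfl⟩
  refine le_antisymm (Submodule.map_le_iff_le_comap.2 h₁) fun x hx => ⟨c • x, h₂ x hx, ?_⟩
  simp [Units.smul_def, hc]

section Model

variable {F F' : Type} [Field F] [Field F'] [Algebra F F']
  {X' : Type} [AddCommGroup X'] [Module F X'] [Module F' X']
  [IsScalarTower F F' X'] [SMulCommClass F F' X']
  (M : Submodule F X')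

theorem modelMap_tmul (c : F') (m : M) : modelMap F F' X' M (c ⊗ₜ m) = c • (m : X') := rfl

theorem modelMap_smul (c : F') (t : F' ⊗[F] M) :
    modelMap F F' X' M (c • t) = c • modelMap F F' X' M t := by
  induction t using TensorProduct.induction_on with
  | zero => simp
  | tmul d m => rw [TensorProduct.smul_tmul', modelMap_tmul, modelMap_tmul, smul_eq_mul, mul_smul]
  | add t₁ t₂ h₁ h₂ => rw [smul_add, map_add, map_add, h₁, h₂, smul_add]

theorem span_eq_top_of_modelMap_surjective (hM : Function.Surjective (modelMap F F' X' M)) :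
    Submodule.span F' (M : Set X') = ⊤ := by
  rw [eq_top_iff]
  rintro x -
  obtain ⟨t, rfl⟩ := hM x
  induction t using TensorProduct.induction_on with
  | zero => simp
  | tmul c m => exact Submodule.smul_mem _ c (Submodule.subset_span m.2)
  | add t₁ t₂ h₁ h₂ => rw [map_add]; exact Submodule.add_mem _ h₁ h₂

variable (hM : Function.Bijective (modelMap F F' X' M))

noncomputable def modelGalAct (σ : F' ≃ₐ[F] F') : X' ≃ₗ[F] X' :=
  (LinearEquiv.ofBijective _ hM).symm ≪≫ₗ σ.toLinearEquiv.rTensor M ≪≫ₗ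
    LinearEquiv.ofBijective _ hM

variable {M}

theorem modelGalAct_modelMap (σ : F' ≃ₐ[F] F') (t : F' ⊗[F] M) :
    modelGalAct M hM σ (modelMap F F' X' M t) =
      modelMap F F' X' M (σ.toLinearEquiv.rTensor M t) :=
  congrArg (LinearEquiv.ofBijective _ hM) <| congrArg _ <|
    (LinearEquiv.ofBijective _ hM).symm_apply_apply t

theorem modelGalAct_smul_of_mem (σ : F' ≃ₐ[F] F') (c : F') {m : X'} (hm : m ∈ M) :
    modelGalAct M hM σ (c • m) = σ c • m :=
  modelGalAct_modelMap hM σ (c ⊗ₜ ⟨m, hm⟩)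

theorem modelGalAct_of_mem (σ : F' ≃ₐ[F] F') {m : X'} (hm : m ∈ M) :
    modelGalAct M hM σ m = m := by
  simpa using modelGalAct_smul_of_mem hM σ 1 hm

theorem modelGalAct_smul (σ : F' ≃ₐ[F] F') (c : F') (x : X') :
    modelGalAct M hM σ (c • x) = σ c • modelGalAct M hM σ x := by
  obtain ⟨t, rfl⟩ := hM.2 x
  induction t using TensorProduct.induction_on with
  | zero => simp
  | tmul d m =>
    rw [modelMap_tmul, smul_smul, modelGalAct_smul_of_mem hM σ _ m.2,
      modelGalAct_smul_of_mem hM σ _ m.2, map_mul, smul_smul]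
  | add t₁ t₂ h₁ h₂ => rw [map_add, smul_add, map_add, h₁, h₂, map_add, smul_add]

theorem modelGalAct_symm_modelGalAct (σ : F' ≃ₐ[F] F') (x : X') :
    modelGalAct M hM σ.symm (modelGalAct M hM σ x) = x := by
  obtain ⟨t, rfl⟩ := hM.2 x
  induction t using TensorProduct.induction_on with
  | zero => simp
  | tmul c m =>
    rw [modelMap_tmul, modelGalAct_smul_of_mem hM _ _ m.2, modelGalAct_smul_of_mem hM _ _ m.2,
      AlgEquiv.symm_apply_apply]
  | add t₁ t₂ h₁ h₂ => rw [map_add, map_add, map_add, h₁, h₂]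

theorem modelGalAct_smul_comm {A : Type} [Monoid A] [DistribMulAction A X']
    [SMulCommClass A F' X'] (σ : F' ≃ₐ[F] F') (a : A) (ha : ∀ m ∈ M, a • m ∈ M) (x : X') :
    modelGalAct M hM σ (a • x) = a • modelGalAct M hM σ x := by
  obtain ⟨t, rfl⟩ := hM.2 x
  induction t using TensorProduct.induction_on with
  | zero => simp
  | tmul c m =>
    rw [modelMap_tmul, smul_comm a c, modelGalAct_smul_of_mem hM σ _ (ha m m.2),
      modelGalAct_smul_of_mem hM σ _ m.2, (smul_comm a _ _).symm]
  | add t₁ t₂ h₁ h₂ => simp only [map_add, smul_add, h₁, h₂]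

theorem mem_of_forall_modelGalAct_eq [IsGalois F F'] {x : X'}
    (h : ∀ σ : F' ≃ₐ[F] F', modelGalAct M hM σ x = x) : x ∈ M := by
  obtain ⟨t, rfl⟩ := hM.2 x
  let b := Module.Basis.ofVectorSpace F M
  have hcoord (i) : (b.baseChange F').repr t i ∈ Set.range (algebraMap F F') := by
    refine (InfiniteGalois.mem_range_algebraMap_iff_fixed _).2 fun σ => ?_
    rw [← baseChange_repr_rTensor, hM.1 ((modelGalAct_modelMap hM σ t).symm.trans (h σ))]
  rw [← (b.baseChange F').linearCombination_repr t, Finsupp.linearCombination_apply,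
    map_finsuppSum]
  refine Submodule.sum_mem _ fun i _ => ?_
  obtain ⟨f, hf⟩ := hcoord i
  dsimp only
  rw [Module.Basis.baseChange_apply, modelMap_smul, ← hf, modelMap_tmul, one_smul,
    algebraMap_smul]
  exact M.smul_mem f (b i).2

end Model

section Comparison

variable {F F' : Type} [Field F] [Field F'] [Algebra F F']
  {X' : Type} [AddCommGroup X'] [Module F X'] [Module F' X']
  [IsScalarTower F F' X'] [SMulCommClass F F' X']
  {M₁ M₂ : Submodule F X'}

theorem exists_modelGalAct_eq_smul_of_schur {A : Type} [Monoid A] [DistribMulAction A X']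
    [SMulCommClass A F' X'] (hM₁ : Function.Bijective (modelMap F F' X' M₁))
    (hM₂ : Function.Bijective (modelMap F F' X' M₂))
    (hschur : ∀ f : X' →ₗ[F'] X',
      (∀ (a : A) (x : X'), f (a • x) = a • f x) → ∃ c : F', f = c • LinearMap.id)
    (hM₁stab : ∀ (a : A), ∀ x ∈ M₁, a • x ∈ M₁) (hM₂stab : ∀ (a : A), ∀ x ∈ M₂, a • x ∈ M₂)
    (σ : F' ≃ₐ[F] F') :
    ∃ u : F', ∀ x, modelGalAct M₂ hM₂ σ x = u • modelGalAct M₁ hM₁ σ x := by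
  let f : X' →ₗ[F'] X' :=
    { toFun := fun x => modelGalAct M₂ hM₂ σ (modelGalAct M₁ hM₁ σ.symm x)
      map_add' := by simp
      map_smul' := by simp [modelGalAct_smul] }
  obtain ⟨u, hu⟩ := hschur f fun a x => by
    simp only [f, LinearMap.coe_mk, AddHom.coe_mk, modelGalAct_smul_comm hM₁ _ a (hM₁stab a),
      modelGalAct_smul_comm hM₂ _ a (hM₂stab a)]
  refine ⟨u, fun x => ?_⟩
  simpa [f, modelGalAct_symm_modelGalAct] using LinearMap.congr_fun hu (modelGalAct M₁ hM₁ σ x)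

theorem exists_mul_eq_of_modelGalAct_eq_smul {M : Submodule F X'}
    (hM : Function.Bijective (modelMap F F' X' M)) {x : X'} (hx : x ≠ 0)
    {u : (F' ≃ₐ[F] F') → F'} (hu : ∀ σ, modelGalAct M hM σ x = u σ • x) :
    ∃ c : F', c ≠ 0 ∧ ∀ σ, u σ * c = σ c := by
  obtain ⟨t, rfl⟩ := hM.2 x
  let B := (Module.Basis.ofVectorSpace F M).baseChange F'
  have ht : t ≠ 0 := by
    rintro rfl
    exact hx (map_zero _)
  obtain ⟨i, hi⟩ := DFunLike.ne_iff.1 ((LinearEquiv.map_ne_zero_iff B.repr).2 ht)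
  refine ⟨B.repr t i, hi, fun σ => ?_⟩
  have hσt : σ.toLinearEquiv.rTensor M t = u σ • t :=
    hM.1 (by rw [← modelGalAct_modelMap hM, hu, modelMap_smul])
  rw [← baseChange_repr_rTensor, hσt, map_smul, Finsupp.smul_apply, smul_eq_mul]

theorem inv_smul_mem_of_modelGalAct_eq_smul [IsGalois F F'] {M : Submodule F X'}
    (hM : Function.Bijective (modelMap F F' X' M)) {c : F'} (hc : c ≠ 0)
    {u : (F' ≃ₐ[F] F') → F'} (huc : ∀ σ, u σ * c = σ c) {x : X'}
    (hx : ∀ σ, modelGalAct M hM σ x = u σ • x) : c⁻¹ • x ∈ M := by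
  refine mem_of_forall_modelGalAct_eq hM fun σ => ?_
  have hu : u σ ≠ 0 := left_ne_zero_of_mul (huc σ ▸ (map_ne_zero σ).2 hc)
  rw [modelGalAct_smul, hx, smul_smul, map_inv₀, ← huc]
  field_simp

theorem exists_smul_mem_of_modelGalAct_eq_smul [IsGalois F F']
    (hM₁ : Function.Bijective (modelMap F F' X' M₁))
    (hM₂ : Function.Bijective (modelMap F F' X' M₂)) {u : (F' ≃ₐ[F] F') → F'}
    (hu : ∀ σ x, modelGalAct M₂ hM₂ σ x = u σ • modelGalAct M₁ hM₁ σ x) :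
    ∃ c : F', c ≠ 0 ∧ (∀ x ∈ M₁, c⁻¹ • x ∈ M₂) ∧ ∀ x ∈ M₂, c • x ∈ M₁ := by
  rcases subsingleton_or_nontrivial X' with _ | _
  · refine ⟨1, one_ne_zero, fun x _ => ?_, fun x _ => ?_⟩ <;>
      rw [Subsingleton.elim x 0, smul_zero] <;> exact zero_mem _
  obtain ⟨m₀, hm₀M, hm₀⟩ : ∃ m ∈ M₁, m ≠ 0 := by
    by_contra! h
    exact top_ne_bot <| (span_eq_top_of_modelMap_surjective M₁ hM₁.2).symm.trans
      (Submodule.span_eq_bot.2 h)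
  have hu₁ : ∀ σ, ∀ m ∈ M₁, modelGalAct M₂ hM₂ σ m = u σ • m := fun σ m hm => by
    rw [hu, modelGalAct_of_mem hM₁ σ hm]
  obtain ⟨c, hc, huc⟩ := exists_mul_eq_of_modelGalAct_eq_smul hM₂ hm₀ (fun σ => hu₁ σ m₀ hm₀M)
  have hu₀ (σ) : u σ ≠ 0 := left_ne_zero_of_mul (huc σ ▸ (map_ne_zero σ).2 hc)
  have hu₂ : ∀ σ, ∀ m ∈ M₂, modelGalAct M₁ hM₁ σ m = (u σ)⁻¹ • m := fun σ m hm => by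
    rw [eq_inv_smul_iff₀ (hu₀ σ), ← hu, modelGalAct_of_mem hM₂ σ hm]
  refine ⟨c, hc, fun x hx => inv_smul_mem_of_modelGalAct_eq_smul hM₂ hc huc (hu₁ · x hx),
    fun x hx => ?_⟩
  simpa using inv_smul_mem_of_modelGalAct_eq_smul hM₁ (inv_ne_zero hc)
    (fun σ => by rw [map_inv₀, ← huc, mul_inv]) (hu₂ · x hx)

end Comparison

theorem model_unique_of_schur_general
    (F F' : Type) [Field F] [Field F'] [Algebra F F'] [IsGalois F F']
    (A : Type) [Ring A]
    (X' : Type) [AddCommGroup X'] [Module F X'] [Module F' X'] [Module A X']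
    [IsScalarTower F F' X'] [SMulCommClass A F' X']
    [SMulCommClass F F' X']
    (hschur : ∀ f : X' →ₗ[F'] X',
      (∀ (a : A) (x : X'), f (a • x) = a • f x) → ∃ c : F', f = c • LinearMap.id)
    (M₁ M₂ : Submodule F X')
    (hM₁stab : ∀ (a : A), ∀ x ∈ M₁, a • x ∈ M₁)
    (hM₁ : Function.Bijective (modelMap F F' X' M₁))
    (hM₂stab : ∀ (a : A), ∀ x ∈ M₂, a • x ∈ M₂)
    (hM₂ : Function.Bijective (modelMap F F' X' M₂)) :
    ∃ e : ↥M₁ ≃ₗ[F] ↥M₂, ∀ (a : A) (y : ↥M₁),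
      ((e ⟨a • (y : X'), hM₁stab a y y.2⟩ : ↥M₂) : X') = a • ((e y : ↥M₂) : X') := by
  choose u hu using exists_modelGalAct_eq_smul_of_schur hM₁ hM₂ hschur hM₁stab hM₂stab
  obtain ⟨c, hc, h₁, h₂⟩ := exists_smul_mem_of_modelGalAct_eq_smul hM₁ hM₂ hu
  obtain ⟨e, he⟩ := exists_linearEquiv_inv_smul hc h₁ h₂
  exact ⟨e, fun a y => by rw [he, he]; exact (smul_comm a c⁻¹ _).symm⟩

/-- **Uniqueness of models (Hilbert 90).**  Let `F'/F` be a Galois extension of fields, `A` an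
`F`-algebra, and `X'` an `A ⊗_F F'`-module (encoded via commuting `A`- and `F'`-actions)
satisfying the Schur condition `End_{A ⊗_F F'}(X') = F'`.  If `X'` admits a model over `F`,
then this model is unique up to `A`-linear isomorphism. -/
theorem model_unique_of_schur
    (F F' : Type) [Field F] [Field F'] [Algebra F F'] [IsGalois F F']
    (A : Type) [Ring A] [Algebra F A]
    (X' : Type) [AddCommGroup X'] [Module F X'] [Module F' X'] [Module A X']
    [IsScalarTower F F' X'] [IsScalarTower F A X'] [SMulCommClass A F' X']
    [SMulCommClass F F' X']
    (hschur : ∀ f : X' →ₗ[F'] X',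
      (∀ (a : A) (x : X'), f (a • x) = a • f x) → ∃ c : F', f = c • LinearMap.id)
    (M₁ M₂ : Submodule F X')
    (hM₁stab : ∀ (a : A), ∀ x ∈ M₁, a • x ∈ M₁)
    (hM₁ : Function.Bijective (modelMap F F' X' M₁))
    (hM₂stab : ∀ (a : A), ∀ x ∈ M₂, a • x ∈ M₂)
    (hM₂ : Function.Bijective (modelMap F F' X' M₂)) :
    ∃ e : ↥M₁ ≃ₗ[F] ↥M₂, ∀ (a : A) (y : ↥M₁),
      ((e ⟨a • (y : X'), hM₁stab a y y.2⟩ : ↥M₂) : X') = a • ((e y : ↥M₂) : X') :=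
  model_unique_of_schur_general F F' A X' hschur M₁ M₂ hM₁stab hM₁ hM₂stab hM₂
end

section
/- Let F'/F be a finite Galois extension of fields of degree n, A an F-algebra, and X' a simple A⊗_F F'-module. Then the restriction of scalars of X' to F, viewed as an A-module, decomposes as a finite direct sum of simple A-modules, the number of summands being at most n = [F':F]. -/
/-!
An `A`-submodule `p` of `X'` is determined by `p ⊗_F F'` inside `X' ⊗_F F' ≅ ∏_σ X'^σ`, the
product of the Galois twists of `X'`, because the trace of `F'/F` is surjective. Each twist is a
simple `A ⊗_F F'`-module, so `X'` has length at most `n = [F' : F]` as an `A`-module. The socle of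
`X'` is stable under the `A`-linear maps `x ↦ c • x` (`c ∈ F'`) and nonzero by finite length, so it
is all of `X'`: hence `X'` is semisimple, a direct sum of exactly `length ≤ n` simple modules.
-/

open scoped TensorProduct

section Semisimple

variable {R M : Type*} [Ring R] [AddCommGroup M] [Module R M]

theorem DirectSum.IsInternal.length_eq_card {ι : Type*} [Fintype ι] [DecidableEq ι]
    {Y : ι → Submodule R M} (h : DirectSum.IsInternal Y) (hY : ∀ i, IsSimpleModule R (Y i)) :
    Module.length R M = Fintype.card ι := by
  let e : M ≃ₗ[R] Π i, Y i :=
    (LinearEquiv.ofBijective (DirectSum.coeLinearMap Y) h).symm.trans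
      (DirectSum.linearEquivFunOnFintype R ι fun i ↦ Y i)
  simp [e.length_eq, Module.length_eq_one]

theorem IsSemisimpleModule.exists_isInternal_fin [IsSemisimpleModule R M] [IsArtinian R M] :
    ∃ (m : ℕ) (Y : Fin m → Submodule R M),
      DirectSum.IsInternal Y ∧ ∀ i, IsSimpleModule R (Y i) := by
  obtain ⟨s, hind, htop, hsimple⟩ := IsSemisimpleModule.exists_sSupIndep_sSup_simples_eq_top R M
  have := (WellFoundedLT.finite_of_sSupIndep hind).to_subtype
  let e := (Finite.equivFin s).symm
  refine ⟨_, fun i ↦ e i, ?_, fun i ↦ hsimple _ (e i).2⟩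
  refine DirectSum.isInternal_submodule_of_iSupIndep_of_iSup_eq_top
    (((sSupIndep_iff s).mp hind).comp e.injective) ?_
  rw [e.iSup_comp (g := fun x : s ↦ (x : Submodule R M)), ← sSup_eq_iSup', htop]

theorem isFullyInvariant_sSup_simples :
    (sSup {m : Submodule R M | IsSimpleModule R m}).IsFullyInvariant := by
  intro f
  refine sSup_le fun m (hm : IsSimpleModule R m) ↦ Submodule.map_le_iff_le_comap.mp ?_
  rw [← m.range_subtype, ← LinearMap.range_comp]
  obtain inj | eq := (f ∘ₗ m.subtype).injective_or_eq_zero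
  · exact le_sSup (IsSimpleModule.congr (LinearEquiv.ofInjective _ inj).symm)
  · simp [eq]

theorem isSemisimpleModule_of_stable_eq_bot_or_top {S : Type*} [DistribSMul S M]
    [SMulCommClass R S M] [IsArtinian R M] [Nontrivial M]
    (h : ∀ p : Submodule R M, (∀ (c : S), ∀ x ∈ p, c • x ∈ p) → p = ⊥ ∨ p = ⊤) :
    IsSemisimpleModule R M := by
  have := SMulCommClass.symm R S M
  have hsocle := h _ fun c _ hx ↦ isFullyInvariant_sSup_simples (DistribSMul.toLinearMap R M c) hx
  refine .of_sSup_simples_eq_top (hsocle.resolve_left ?_)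
  have := isAtomic_of_orderBot_wellFounded_lt (wellFounded_lt (α := Submodule R M))
  obtain ⟨m, hm⟩ := IsAtomic.exists_atom (Submodule R M)
  exact ne_bot_of_le_ne_bot hm.1 (le_sSup (isSimpleModule_iff_isAtom.mpr hm))

end Semisimple

section TensorAction

variable {F F' A M : Type*} [CommRing F] [CommRing F'] [Algebra F F'] [Ring A] [Algebra F A]
  [AddCommGroup M] [Module F' M] [Module A M] [Module (A ⊗[F] F') M]

def Submodule.toTensorOfSMulMem (hM : ∀ (a : A) (c : F') (x : M), (a ⊗ₜ[F] c) • x = a • c • x)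
    (p : Submodule A M) (hp : ∀ (c : F'), ∀ x ∈ p, c • x ∈ p) :
    Submodule (A ⊗[F] F') M where
  toAddSubmonoid := p.toAddSubmonoid
  smul_mem' r x hx := by
    induction r using TensorProduct.induction_on with
    | zero => simp
    | tmul a c => simpa [hM] using p.smul_mem a (hp c x hx)
    | add r s hr hs => simpa [add_smul] using p.add_mem hr hs

theorem isSimpleModule_tensor_of_stable_eq_bot_or_top [Nontrivial M]
    (hM : ∀ (a : A) (c : F') (x : M), (a ⊗ₜ[F] c) • x = a • c • x)
    (h : ∀ p : Submodule A M, (∀ (c : F'), ∀ x ∈ p, c • x ∈ p) → p = ⊥ ∨ p = ⊤) :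
    IsSimpleModule (A ⊗[F] F') M where
  eq_bot_or_eq_top P := by
    let p : Submodule A M :=
      { toAddSubmonoid := P.toAddSubmonoid
        smul_mem' a x hx := by simpa [hM] using P.smul_mem (a ⊗ₜ[F] (1 : F')) hx }
    have hp : ∀ (c : F'), ∀ x ∈ p, c • x ∈ p := fun c x hx ↦ show c • x ∈ P by
      simpa [hM] using P.smul_mem ((1 : A) ⊗ₜ[F] c) hx
    refine (h p hp).imp (fun hbot ↦ ?_) (fun htop ↦ ?_)
    · exact (Submodule.eq_bot_iff _).2 fun x hx ↦ (Submodule.eq_bot_iff _).1 hbot x hx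
    · exact Submodule.eq_top_iff'.2 fun x ↦ Submodule.eq_top_iff'.1 htop x

end TensorAction

section ScalarTwist

variable {F F' : Type*} [CommRing F] [CommRing F'] [Algebra F F']

/-- `M` with `c : F'` acting as `σ c`. The ring `A` is part of the type so that the instance
`Module A (ScalarTwist A σ M)` cannot be found for the ring `F'`, where it would clash with the
twisted action. -/
def ScalarTwist (_A : Type*) (_σ : F' ≃ₐ[F] F') (M : Type*) : Type _ := M

namespace ScalarTwist

variable {A M : Type*} [Ring A] [AddCommGroup M] [Module F' M] [Module A M] (σ : F' ≃ₐ[F] F')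

instance : AddCommGroup (ScalarTwist A σ M) := inferInstanceAs (AddCommGroup M)

instance : Module A (ScalarTwist A σ M) := inferInstanceAs (Module A M)

instance : Module F' (ScalarTwist A σ M) := Module.compHom M (σ : F' →+* F')

variable (A M) in
def equiv : ScalarTwist A σ M ≃ₗ[A] M := LinearEquiv.refl A M

theorem equiv_smul (c : F') (x : ScalarTwist A σ M) :
    equiv A M σ (c • x) = σ c • equiv A M σ x :=
  rfl

instance [SMulCommClass A F' M] : SMulCommClass A F' (ScalarTwist A σ M) where
  smul_comm a c x := smul_comm a (σ c) (equiv A M σ x)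

instance [Nontrivial M] : Nontrivial (ScalarTwist A σ M) := inferInstanceAs (Nontrivial M)

variable [Module F M] [IsScalarTower F F' M]

instance : Module F (ScalarTwist A σ M) := inferInstanceAs (Module F M)

instance : IsScalarTower F F' (ScalarTwist A σ M) where
  smul_assoc f c x := show σ (f • c) • equiv A M σ x = f • σ c • equiv A M σ x by
    rw [map_smul, smul_assoc]

variable [Algebra F A] [IsScalarTower F A M] [SMulCommClass A F' M]

instance : IsScalarTower F A (ScalarTwist A σ M) := inferInstanceAs (IsScalarTower F A M)

instance : Module (A ⊗[F] F') (ScalarTwist A σ M) := TensorProduct.Algebra.module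

theorem tmul_smul (a : A) (c : F') (x : ScalarTwist A σ M) : (a ⊗ₜ[F] c) • x = a • c • x :=
  rfl

theorem isSimpleModule [Nontrivial M]
    (h : ∀ p : Submodule A M, (∀ (c : F'), ∀ x ∈ p, c • x ∈ p) → p = ⊥ ∨ p = ⊤) :
    IsSimpleModule (A ⊗[F] F') (ScalarTwist A σ M) := by
  refine isSimpleModule_tensor_of_stable_eq_bot_or_top (tmul_smul σ) fun p hp ↦ ?_
  let e := Submodule.orderIsoMapComap (equiv A M σ)
  have he : ∀ (c : F'), ∀ x ∈ e p, c • x ∈ e p := by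
    rintro c _ ⟨y, hy, rfl⟩
    exact ⟨σ.symm c • y, hp _ y hy, by simp [equiv_smul]⟩
  exact (h (e p) he).imp (map_eq_bot_iff e).1 (map_eq_top_iff e).1

end ScalarTwist

end ScalarTwist

noncomputable section Galois

variable {F F' A M : Type*} [Field F] [Field F'] [Algebra F F'] [FiniteDimensional F F']
  [Ring A] [AddCommGroup M] [Module F' M] [Module A M] [SMulCommClass A F' M]

variable (F) in
def twistedTrace (c : F') : (Π σ : F' ≃ₐ[F] F', ScalarTwist A σ M) →ₗ[A] M where
  toFun w := ∑ σ, σ c • ScalarTwist.equiv A M σ (w σ)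
  map_add' w v := by simp [smul_add, Finset.sum_add_distrib]
  map_smul' a w := by simp [Finset.smul_sum, smul_comm a]

theorem twistedTrace_smul (c d : F') (w : Π σ : F' ≃ₐ[F] F', ScalarTwist A σ M) :
    twistedTrace F c (d • w) = twistedTrace F (c * d) w := by
  simp [twistedTrace, ScalarTwist.equiv_smul, mul_smul]

variable [Module F M] [IsScalarTower F F' M]

theorem twistedTrace_diagonal [IsGalois F F'] (c : F') (x : M) :
    twistedTrace F c (fun σ ↦ (ScalarTwist.equiv A M σ).symm x) = Algebra.trace F F' c • x := by
  rw [← algebraMap_smul F', trace_eq_sum_automorphisms, Finset.sum_smul]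
  simp [twistedTrace]

variable [Algebra F A] [IsScalarTower F A M]

variable (F F') in
/-- Under `M ⊗_F F' ≅ Π σ, M^σ`, `m ⊗ c ↦ (σ c • m)_σ`, this is `p ⊗_F F'`. -/
def Submodule.twistedBaseChange (p : Submodule A M) :
    Submodule (A ⊗[F] F') (Π σ : F' ≃ₐ[F] F', ScalarTwist A σ M) :=
  (⨅ c : F', p.comap (twistedTrace F c)).toTensorOfSMulMem
    (fun a c w ↦ funext fun σ ↦ ScalarTwist.tmul_smul σ a c (w σ)) fun d w hw ↦ by
      simp only [Submodule.mem_iInf, Submodule.mem_comap, twistedTrace_smul] at hw ⊢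
      exact fun c ↦ hw (c * d)

theorem Submodule.mem_twistedBaseChange {p : Submodule A M}
    {w : Π σ : F' ≃ₐ[F] F', ScalarTwist A σ M} :
    w ∈ p.twistedBaseChange F F' ↔ ∀ c, twistedTrace F c w ∈ p := by
  simp [twistedBaseChange, Submodule.toTensorOfSMulMem]

theorem Submodule.diagonal_mem_twistedBaseChange_iff [IsGalois F F'] {p : Submodule A M}
    {x : M} :
    (fun σ : F' ≃ₐ[F] F' ↦ (ScalarTwist.equiv A M σ).symm x) ∈ p.twistedBaseChange F F' ↔
      x ∈ p := by
  simp only [mem_twistedBaseChange, twistedTrace_diagonal]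
  refine ⟨fun h ↦ ?_, fun hx c ↦ p.smul_of_tower_mem _ hx⟩
  obtain ⟨c, hc⟩ := Algebra.trace_surjective F F' 1
  simpa [hc] using h c

theorem Submodule.twistedBaseChange_strictMono [IsGalois F F'] :
    StrictMono (twistedBaseChange F F' : Submodule A M → _) := by
  refine Monotone.strictMono_of_injective (fun p q hpq w hw ↦ ?_) fun p q hpq ↦ ?_
  · simp only [mem_twistedBaseChange] at hw ⊢
    exact fun c ↦ hpq (hw c)
  · ext x
    rw [← diagonal_mem_twistedBaseChange_iff (F := F) (F' := F'), hpq,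
      diagonal_mem_twistedBaseChange_iff]

theorem length_le_length_pi_scalarTwist [IsGalois F F'] :
    Module.length A M ≤ Module.length (A ⊗[F] F') (Π σ : F' ≃ₐ[F] F', ScalarTwist A σ M) := by
  rw [← WithBot.coe_le_coe, Module.coe_length, Module.coe_length]
  exact Order.krullDim_le_of_strictMono (Submodule.twistedBaseChange F F')
    Submodule.twistedBaseChange_strictMono

theorem length_le_finrank_of_stable_eq_bot_or_top [IsGalois F F'] [Nontrivial M]
    (h : ∀ p : Submodule A M, (∀ (c : F'), ∀ x ∈ p, c • x ∈ p) → p = ⊥ ∨ p = ⊤) :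
    Module.length A M ≤ Module.finrank F F' := by
  have := fun σ : F' ≃ₐ[F] F' ↦ ScalarTwist.isSimpleModule σ h
  calc Module.length A M
      ≤ Module.length (A ⊗[F] F') (Π σ : F' ≃ₐ[F] F', ScalarTwist A σ M) :=
        length_le_length_pi_scalarTwist
    _ = Fintype.card (F' ≃ₐ[F] F') := by simp [Module.length_eq_one]
    _ = Module.finrank F F' := by rw [← Nat.card_eq_fintype_card, IsGalois.card_aut_eq_finrank]

end Galois

/-- **Restriction of scalars of simple modules along a finite Galois extension.**
Let `F'/F` be a finite Galois extension of degree `n = [F' : F]`, `A` an `F`-algebra and `X'`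
a simple `A ⊗_F F'`-module (encoded as a module with commuting `A`- and `F'`-actions: it is
nontrivial and every `A`-submodule which is also `F'`-stable is trivial).  Then `X'`, viewed
as an `A`-module by restriction of scalars, decomposes as a finite internal direct sum of
simple `A`-modules, the number of summands being at most `n = [F' : F]`. -/
theorem restrictScalars_simple_decomposes
    (F F' : Type) [Field F] [Field F'] [Algebra F F'] [IsGalois F F'] [FiniteDimensional F F']
    (A : Type) [Ring A] [Algebra F A]
    (X' : Type) [AddCommGroup X'] [Module F X'] [Module F' X'] [Module A X']
    [IsScalarTower F F' X'] [IsScalarTower F A X'] [SMulCommClass A F' X']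
    (hnt : Nontrivial X')
    (hsimple : ∀ p : Submodule A X',
      (∀ (c : F'), ∀ x ∈ p, c • x ∈ p) → p = ⊥ ∨ p = ⊤) :
    ∃ (n : ℕ) (Y : Fin n → Submodule A X'),
      n ≤ Module.finrank F F' ∧
      DirectSum.IsInternal Y ∧
      ∀ i, IsSimpleModule A ↥(Y i) := by
  have hlen := length_le_finrank_of_stable_eq_bot_or_top (F := F) hsimple
  have : IsArtinian A X' :=
    (isFiniteLength_iff_isNoetherian_isArtinian.mp
      (Module.length_ne_top_iff.mp (ne_top_of_le_ne_top (ENat.natCast_ne_top _) hlen))).2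
  have := isSemisimpleModule_of_stable_eq_bot_or_top hsimple
  obtain ⟨m, Y, hY, hYsimple⟩ := IsSemisimpleModule.exists_isInternal_fin (R := A) (M := X')
  refine ⟨m, Y, ?_, hY, hYsimple⟩
  simpa [hY.length_eq_card hYsimple] using hlen
end

section
/- Let F'/F be a quadratic extension, A an F-algebra, and X an absolutely irreducible A⊗_F F'-module (so End_{A⊗F'}(X) = F'); assume End of simple modules over A are algebraic division algebras over F. If Y = res_{F'/F} X is an irreducible A-module, then End_A(Y) is an F-algebra of dimension 2 or 4 containing F', and it is 4-dimensional if and only if X is isomorphic to its Galois conjugate X̄ = X ⊗_{F',τ} F' (where τ generates Gal(F'/F)); in the 4-dimensional case End_A(Y) is a quaternion division algebra over F. -/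
open scoped TensorProduct

/-- Absolute irreducibility of an `A ⊗_F F'`-module `X'` (encoded via commuting `A`- and
`F'`-actions): for every field extension `F''/F'` the base change `F'' ⊗_{F'} X'` is simple
under the actions of `F''` and of `A`. -/
def IsAbsIrred (F' : Type) [Field F']
    (A : Type) [Ring A]
    (X' : Type) [AddCommGroup X'] [Module F' X'] [Module A X'] [SMulCommClass A F' X'] :
    Prop :=
  ∀ (F'' : Type) [Field F''] [Algebra F' F''],
    Nontrivial (F'' ⊗[F'] X') ∧
      ∀ p : Submodule F'' (F'' ⊗[F'] X'),
        (∀ (a : A), ∀ v ∈ p,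
          LinearMap.lTensor F'' (DistribMulAction.toLinearMap F' X' a) v ∈ p) →
        p = ⊥ ∨ p = ⊤

/-!
Let `F'` act on `E = End_A(X')` by scalars and pick `α ∈ F'` with `τ α ≠ α`. Since `α + τ α` and
`α * τ α` lie in `F`, `E` is the direct sum of the centralizer `C` of `F'` and the space `T` of
`τ`-semilinear endomorphisms. An `F'`-linear endomorphism that is algebraic has an eigenvalue over
a splitting field; its eigenspace is `A`-stable, so absolute irreducibility makes it a scalar,
whence `C = F'`. A nonzero element of `T` is invertible and left multiplication by it maps `C`
onto `T`, so `dim_F E = 2 + dim_F T` is `2` or `4`, and it is `4` exactly when there is a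
`τ`-semilinear `A`-automorphism of `X'`, i.e. an isomorphism `X' ≅ X̄'`.
-/

open Polynomial Module

section Intertwiners

variable (F : Type*) {R : Type*} [CommRing F] [Ring R] [Algebra F R]

def intertwiners (a b : R) : Submodule F R :=
  LinearMap.ker (LinearMap.mulRight F a - LinearMap.mulLeft F b)

variable {F}

theorem mem_intertwiners {a b d : R} : d ∈ intertwiners F a b ↔ d * a = b * d := by
  simp [intertwiners, sub_eq_zero]

theorem mul_mem_intertwiners {a b c d e : R} (hd : d ∈ intertwiners F a b)
    (he : e ∈ intertwiners F b c) : e * d ∈ intertwiners F a c := by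
  rw [mem_intertwiners] at *
  rw [mul_assoc, hd, ← mul_assoc, he, mul_assoc]

theorem isCompl_intertwiners {a b : R} (hab : Commute a b) (hu : IsUnit (a - b)) {t n : F}
    (ht : a + b = algebraMap F R t) (hn : a * b = algebraMap F R n) :
    IsCompl (intertwiners F a a) (intertwiners F a b) := by
  -- `d = (a - b)⁻¹ (d a - b d) + (a - b)⁻¹ (a d - d a)`, and centrality of `a + b` and `a * b`
  -- puts the first summand in the centralizer of `a` and the second among the intertwiners.
  have key (d : R) : d * (a * a) + a * (b * d) = a * (d * a) + b * (d * a) := by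
    have hcentral (z : R) (y : F) : algebraMap F R y * z = z * algebraMap F R y :=
      Algebra.commutes y z
    calc d * (a * a) + a * (b * d) = d * a * (a + b) := by
          rw [← mul_assoc a, hn, hcentral, ← hn]; noncomm_ring
      _ = (a + b) * (d * a) := by rw [ht, hcentral]
      _ = a * (d * a) + b * (d * a) := add_mul _ _ _
  obtain ⟨u, hu⟩ := hu
  have hua : Commute (↑u⁻¹ : R) a := by
    apply Commute.units_inv_left
    rw [hu]
    exact (Commute.refl a).sub_left hab.symm
  have hub : Commute (↑u⁻¹ : R) b := by
    apply Commute.units_inv_left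
    rw [hu]
    exact hab.sub_left (Commute.refl b)
  constructor
  · rw [Submodule.disjoint_def]
    intro d hda hdb
    rw [mem_intertwiners] at hda hdb
    have : (a - b) * d = 0 := by rw [sub_mul, ← hda, hdb, sub_self]
    rwa [← hu, u.isUnit.mul_right_eq_zero] at this
  · rw [Submodule.codisjoint_iff_exists_add_eq]
    intro d
    refine ⟨↑u⁻¹ * (d * a - b * d), ↑u⁻¹ * (a * d - d * a), ?_, ?_, ?_⟩
    · refine mul_mem_intertwiners ?_ (mem_intertwiners.2 hua.eq)
      rw [mem_intertwiners, sub_mul, mul_sub, sub_eq_sub_iff_add_eq_add]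
      simpa only [mul_assoc] using key d
    · refine mul_mem_intertwiners ?_ (mem_intertwiners.2 hub.eq)
      rw [mem_intertwiners, sub_mul, mul_sub, sub_eq_sub_iff_add_eq_add, ← mul_assoc b a,
        ← hab.eq]
      simpa only [mul_assoc, add_comm] using (key d).symm
    · rw [← mul_add, show d * a - b * d + (a * d - d * a) = (a - b) * d by noncomm_ring, ← hu,
        Units.inv_mul_cancel_left]

theorem intertwiners_eq_map_mulLeft {a b : R} (u : Rˣ) (hu : (u : R) ∈ intertwiners F a b) :
    intertwiners F a b = (intertwiners F a a).map (u.mulLeftLinearEquiv F R : R →ₗ[F] R) := by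
  have hinv : (↑u⁻¹ : R) ∈ intertwiners F b a := by
    rw [mem_intertwiners] at hu ⊢
    rw [Units.inv_mul_eq_iff_eq_mul, ← mul_assoc, hu, Units.mul_inv_cancel_right]
  ext d
  rw [Submodule.mem_map_equiv, Units.symm_mulLeftLinearEquiv, Units.mulLeftLinearEquiv_apply]
  refine ⟨fun hd => mul_mem_intertwiners hd hinv, fun hd => ?_⟩
  simpa using mul_mem_intertwiners hd hu

theorem finrank_eq_two_mul_of_isCompl_intertwiners {K R : Type*} [Field K] [Ring R] [Algebra K R]
    {a b : R} (hcompl : IsCompl (intertwiners K a a) (intertwiners K a b))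
    [FiniteDimensional K (intertwiners K a a)] (u : Rˣ) (hu : (u : R) ∈ intertwiners K a b) :
    finrank K R = 2 * finrank K (intertwiners K a a) := by
  have hT := intertwiners_eq_map_mulLeft u hu
  have : FiniteDimensional K (intertwiners K a b) := by
    rw [hT]; infer_instance
  have := Submodule.finrank_sup_add_finrank_inf_eq (intertwiners K a a) (intertwiners K a b)
  rw [hcompl.sup_eq_top, hcompl.inf_eq_bot, finrank_top, finrank_bot, hT,
    LinearEquiv.finrank_map_eq] at this
  omega

end Intertwiners

theorem Module.End.exists_hasEigenvalue_of_aeval_eq_zero {K V : Type*} [Field K]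
    [AddCommGroup V] [Module K V] [Nontrivial V] {f : Module.End K V} {p : K[X]} (hp : p ≠ 0)
    (hsplit : p.Splits) (hf : aeval f p = 0) : ∃ μ, f.HasEigenvalue μ := by
  by_contra! h
  let Inj (q : K[X]) : Prop := Function.Injective (aeval f q)
  have hmul (q r : K[X]) (hq : Inj q) (hr : Inj r) : Inj (q * r) := by
    simp only [Inj, map_mul, Module.End.coe_mul]; exact hq.comp hr
  have hlinear (μ : K) : Inj (X - C μ) := by
    have := h μ
    rw [Module.End.hasEigenvalue_iff, not_not, Module.End.eigenspace_def,
      ← Algebra.algebraMap_eq_smul_one, LinearMap.ker_eq_bot] at this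
    simpa [Inj] using this
  have hC : Inj (C p.leadingCoeff) := fun x y hxy =>
    smul_right_injective V (leadingCoeff_ne_zero.2 hp) (by simpa using hxy)
  have hinj : Inj p := by
    rw [hsplit.eq_prod_roots]
    refine hmul _ _ hC (Multiset.prod_induction _ _ hmul (fun _ _ h => by simpa using h) ?_)
    rintro _ hq
    obtain ⟨μ, -, rfl⟩ := Multiset.mem_map.1 hq
    exact hlinear μ
  obtain ⟨v, hv⟩ := exists_ne (0 : V)
  exact hv (hinj (by simp [hf]))

theorem Module.End.exists_eq_smul_of_baseChange_eq_smul {K L M : Type*} [Field K] [Field L]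
    [Algebra K L] [AddCommGroup M] [Module K M] {φ : Module.End K M} {μ : L}
    (h : ∀ v, φ.baseChange L v = μ • v) : ∃ c : K, ∀ x, φ x = c • x := by
  obtain ⟨g, hg⟩ := (Algebra.linearMap K L).exists_leftInverse_of_injective
    (LinearMap.ker_eq_bot.2 (algebraMap K L).injective)
  have hg1 : g 1 = 1 := by simpa using LinearMap.congr_fun hg 1
  refine ⟨g μ, fun x => ?_⟩
  simpa [hg1, TensorProduct.smul_tmul'] using
    congrArg (TensorProduct.lid K M ∘ LinearMap.rTensor M g) (h (1 ⊗ₜ x))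

theorem IsAbsIrred.exists_eq_smul {K A X : Type} [Field K] [Ring A] [AddCommGroup X]
    [Module K X] [Module A X] [SMulCommClass A K X] (habs : IsAbsIrred K A X)
    {φ : Module.End K X} (hφ : ∀ (a : A) (x : X), φ (a • x) = a • φ x)
    (halg : IsAlgebraic K φ) : ∃ c : K, ∀ x, φ x = c • x := by
  obtain ⟨p, hp, hφp⟩ := halg
  let L := p.SplittingField
  obtain ⟨_, hsimple⟩ := habs L
  let Φ : Module.End L (L ⊗[K] X) := φ.baseChange L
  obtain ⟨μ, hμ⟩ := Module.End.exists_hasEigenvalue_of_aeval_eq_zero (f := Φ) (map_ne_zero hp)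
    (SplittingField.splits p) (by
      rw [aeval_map_algebraMap]
      exact (aeval_algHom_apply (Module.End.baseChangeHom K L X) φ p).trans (by simp [hφp]))
  have hstable (a : A) : ∀ v ∈ Φ.eigenspace μ,
      LinearMap.lTensor L (DistribSMul.toLinearMap K X a) v ∈ Φ.eigenspace μ := by
    intro v hv
    let T := (DistribSMul.toLinearMap K X a).baseChange L
    have hcomm : Φ ∘ₗ T = T ∘ₗ Φ := by
      simp only [Φ, T, ← LinearMap.baseChange_comp]
      congr 1
      ext x
      exact hφ a x
    rw [Module.End.mem_eigenspace_iff] at hv ⊢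
    rw [← LinearMap.baseChange_eq_ltensor, ← LinearMap.comp_apply, hcomm, LinearMap.comp_apply,
      hv, map_smul]
  have htop := (hsimple _ hstable).resolve_left hμ
  refine Module.End.exists_eq_smul_of_baseChange_eq_smul (L := L) (μ := μ) fun v => ?_
  exact Module.End.mem_eigenspace_iff.1 (htop ▸ Submodule.mem_top)

section QuadraticExtension

variable {F F' : Type*} [Field F] [Field F'] [Algebra F F']

theorem span_one_pair_eq_top_of_finrank_eq_two (hquad : finrank F F' = 2) {α : F'}
    (hα : α ∉ Set.range (algebraMap F F')) : Submodule.span F {1, α} = ⊤ := by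
  have : FiniteDimensional F F' := .of_finrank_eq_succ hquad
  have hli : LinearIndependent F ![1, α] := by
    refine LinearIndependent.pair_iff.2 fun x y hxy => ?_
    by_cases hy : y = 0
    · subst hy
      simpa using hxy
    · refine absurd ⟨-(x / y), ?_⟩ hα
      have hy' : algebraMap F F' y ≠ 0 := by simpa using hy
      rw [Algebra.smul_def, Algebra.smul_def, mul_one] at hxy
      rw [map_neg, map_div₀, neg_div', div_eq_iff hy']
      linear_combination -hxy
  simpa [Matrix.range_cons, Set.pair_comm] using
    hli.span_eq_top_of_card_eq_finrank' (by simp [hquad])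

theorem AlgHom.notMem_range_algebraMap_of_apply_ne (τ : F' →ₐ[F] F') {α : F'}
    (hα : τ α ≠ α) : α ∉ Set.range (algebraMap F F') := fun ⟨x, hx⟩ => hα (hx ▸ τ.commutes x)

theorem exists_add_eq_algebraMap_and_mul_eq_algebraMap (hquad : finrank F F' = 2)
    (τ : F' →ₐ[F] F') {α : F'} (hα : τ α ≠ α) :
    ∃ t n : F, α + τ α = algebraMap F F' t ∧ α * τ α = algebraMap F F' n := by
  have hspan := span_one_pair_eq_top_of_finrank_eq_two hquad
    (τ.notMem_range_algebraMap_of_apply_ne hα)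
  obtain ⟨x, y, hxy⟩ : ∃ x y : F, x • 1 + y • α = α * α :=
    Submodule.mem_span_pair.1 (by rw [hspan]; exact Submodule.mem_top)
  rw [Algebra.smul_def, Algebra.smul_def, mul_one] at hxy
  have hτxy : τ α * τ α = algebraMap F F' x + algebraMap F F' y * τ α := by
    simpa using congrArg τ hxy.symm
  have hsum : α + τ α = algebraMap F F' y := by
    have : (α - τ α) * (α + τ α - algebraMap F F' y) = 0 := by
      linear_combination -hxy - hτxy
    exact sub_eq_zero.1 ((mul_eq_zero.1 this).resolve_left (sub_ne_zero.2 hα.symm))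
  exact ⟨y, -x, hsum, by rw [map_neg]; linear_combination α * hsum + hxy⟩

variable {R : Type*} [Ring R] [Algebra F R]

theorem mem_intertwiners_iff_forall (hquad : finrank F F' = 2) (s : F' →ₐ[F] R)
    (σ : F' →ₐ[F] F') {α : F'} (hα : α ∉ Set.range (algebraMap F F')) {d : R} :
    d ∈ intertwiners F (s α) (s (σ α)) ↔ ∀ c, d * s c = s (σ c) * d := by
  refine ⟨fun h c => ?_, fun h => mem_intertwiners.2 (h α)⟩
  have := LinearMap.ext_on (span_one_pair_eq_top_of_finrank_eq_two hquad hα)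
    (f := (LinearMap.mulLeft F d).comp s.toLinearMap)
    (g := (LinearMap.mulRight F d).comp (s.comp σ).toLinearMap) (by
      rintro _ (rfl | rfl) <;> simp [mem_intertwiners.1 h])
  exact LinearMap.congr_fun this c

theorem isCompl_intertwiners_of_apply_ne (hquad : finrank F F' = 2) (s : F' →ₐ[F] R)
    (τ : F' →ₐ[F] F') {α : F'} (hα : τ α ≠ α) :
    IsCompl (intertwiners F (s α) (s α)) (intertwiners F (s α) (s (τ α))) := by
  obtain ⟨t, n, ht, hn⟩ := exists_add_eq_algebraMap_and_mul_eq_algebraMap hquad τ hα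
  refine isCompl_intertwiners ((Commute.all α (τ α)).map s) ?_ (t := t) (n := n)
    (by rw [← map_add, ht, s.commutes]) (by rw [← map_mul, hn, s.commutes])
  rw [← map_sub]
  exact (IsUnit.mk0 _ (sub_ne_zero.2 hα.symm)).map s

theorem finrank_eq_four_of_unit_mem_intertwiners [Nontrivial R] (hquad : finrank F F' = 2)
    (s : F' →ₐ[F] R) (τ : F' →ₐ[F] F') {α : F'} (hα : τ α ≠ α)
    (hC : intertwiners F (s α) (s α) = LinearMap.range s.toLinearMap) (u : Rˣ)
    (hu : (u : R) ∈ intertwiners F (s α) (s (τ α))) : finrank F R = 4 := by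
  have : FiniteDimensional F F' := .of_finrank_eq_succ hquad
  have : FiniteDimensional F (intertwiners F (s α) (s α)) := by
    rw [hC]; infer_instance
  rw [finrank_eq_two_mul_of_isCompl_intertwiners (isCompl_intertwiners_of_apply_ne hquad s τ hα)
    u hu, hC, LinearMap.finrank_range_of_inj (s : F' →+* R).injective, hquad]

theorem range_eq_top_of_intertwiners_eq_bot (hquad : finrank F F' = 2) (s : F' →ₐ[F] R)
    (τ : F' →ₐ[F] F') {α : F'} (hα : τ α ≠ α)
    (hC : intertwiners F (s α) (s α) = LinearMap.range s.toLinearMap)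
    (hT : intertwiners F (s α) (s (τ α)) = ⊥) : LinearMap.range s.toLinearMap = ⊤ :=
  hC ▸ eq_top_of_isCompl_bot (hT ▸ isCompl_intertwiners_of_apply_ne hquad s τ hα)

end QuadraticExtension

theorem Polynomial.sum_smul_pow_eq_aeval {R S : Type*} [CommSemiring R] [Semiring S] [Algebra R S]
    (p : R[X]) (x : S) : p.sum (fun n c => c • x ^ n) = aeval x p := by
  simp [aeval_def, eval₂_eq_sum, Algebra.smul_def]

def Module.End.restrictScalarsAlgHom (R S M : Type*) [CommSemiring R] [Semiring S] [Algebra R S]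
    [AddCommMonoid M] [Module R M] [Module S M] [IsScalarTower R S M] :
    Module.End S M →ₐ[R] Module.End R M where
  toFun := LinearMap.restrictScalars R
  map_one' := rfl
  map_mul' _ _ := rfl
  map_zero' := rfl
  map_add' _ _ := rfl
  commutes' _ := rfl

section Endomorphisms

variable {F F' A X : Type} [Field F] [Field F'] [Algebra F F'] [Ring A] [Algebra F A]
  [AddCommGroup X] [Module F X] [Module F' X] [Module A X] [IsScalarTower F F' X]
  [IsScalarTower F A X] [SMulCommClass F' A X]

theorem mem_intertwiners_lsmul_iff (hquad : finrank F F' = 2) (σ : F' →ₐ[F] F') {α : F'}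
    (hα : α ∉ Set.range (algebraMap F F')) {d : Module.End A X} :
    d ∈ intertwiners F (Algebra.lsmul F A X α) (Algebra.lsmul F A X (σ α)) ↔
      ∀ (c : F') (x : X), d (c • x) = σ c • d x := by
  rw [mem_intertwiners_iff_forall hquad _ σ hα]
  simp only [LinearMap.ext_iff, Module.End.mul_apply, Algebra.lsmul_apply]

theorem exists_unit_mem_intertwiners_lsmul_iff (hquad : finrank F F' = 2) (σ : F' →ₐ[F] F')
    {α : F'} (hα : α ∉ Set.range (algebraMap F F')) :
    (∃ u : (Module.End A X)ˣ,
        ↑u ∈ intertwiners F (Algebra.lsmul F A X α) (Algebra.lsmul F A X (σ α))) ↔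
      ∃ j : X ≃+ X, (∀ (c : F') (x : X), j (c • x) = σ c • j x) ∧
        ∀ (a : A) (x : X), j (a • x) = a • j x := by
  simp only [mem_intertwiners_lsmul_iff hquad σ hα]
  constructor
  · rintro ⟨u, hu⟩
    exact ⟨(LinearMap.GeneralLinearGroup.generalLinearEquiv A X u).toAddEquiv, hu,
      (LinearMap.GeneralLinearGroup.generalLinearEquiv A X u).map_smul⟩
  · rintro ⟨j, hj, hjA⟩
    exact ⟨(LinearMap.GeneralLinearGroup.generalLinearEquiv A X).symm (j.toLinearEquiv hjA), hj⟩

theorem intertwiners_lsmul_self_eq_range [SMulCommClass A F' X] (hquad : finrank F F' = 2)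
    (habs : IsAbsIrred F' A X) (halg : ∀ d : Module.End A X, IsAlgebraic F d) {α : F'}
    (hα : α ∉ Set.range (algebraMap F F')) :
    intertwiners F (Algebra.lsmul F A X α) (Algebra.lsmul F A X α) =
      LinearMap.range (Algebra.lsmul F A X (A := F')).toLinearMap := by
  refine le_antisymm (fun d hd => ?_) ?_
  · replace hd := (mem_intertwiners_lsmul_iff hquad (AlgHom.id F F') hα).1 hd
    let dF' : Module.End F' X := { toFun := d, map_add' := d.map_add, map_smul' := hd }
    have hdF' : IsAlgebraic F' dF' := by
      refine IsAlgebraic.extendScalars (algebraMap F F').injective ?_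
      rw [← isAlgebraic_algHom_iff (Module.End.restrictScalarsAlgHom F F' X)
        (LinearMap.restrictScalars_injective F)]
      exact (halg d).algHom (Module.End.restrictScalarsAlgHom F A X)
    obtain ⟨c, hc⟩ := habs.exists_eq_smul (φ := dF') d.map_smul hdF'
    exact ⟨c, LinearMap.ext fun x => (hc x).symm⟩
  · rintro _ ⟨c, rfl⟩
    exact mem_intertwiners.2 ((Commute.all c α).map (Algebra.lsmul F A X)).eq

end Endomorphisms

theorem end_of_irreducible_restriction_general
    (F F' : Type) [Field F] [Field F'] [Algebra F F']
    (hquad : Module.finrank F F' = 2)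
    (τ : F' ≃ₐ[F] F') (hτ : τ ≠ AlgEquiv.refl)
    (A : Type) [Ring A] [Algebra F A]
    (X' : Type) [AddCommGroup X'] [Module F X'] [Module F' X'] [Module A X']
    [IsScalarTower F F' X'] [IsScalarTower F A X'] [SMulCommClass A F' X']
    (habs : IsAbsIrred F' A X')
    (halg : ∀ (M : Type) [AddCommGroup M] [Module F M] [Module A M],
      ∀ [IsScalarTower F A M] [SMulCommClass F A M],
      IsSimpleModule A M → ∀ φ : Module.End A M,
        (φ ≠ 0 → IsUnit φ) ∧
        ∃ p : Polynomial F, p ≠ 0 ∧ p.sum (fun n c => c • φ ^ n) = 0)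
    (hirr : IsSimpleModule A X') :
    (Module.finrank F (Module.End A X') = 2 ∨ Module.finrank F (Module.End A X') = 4) ∧
    ((Module.finrank F (Module.End A X') = 4) ↔
      ∃ j : X' ≃+ X', (∀ (c : F') (x : X'), j (c • x) = τ c • j x) ∧
        (∀ (a : A) (x : X'), j (a • x) = a • j x)) ∧
    ((Module.finrank F (Module.End A X') = 4) →
      ∀ φ : Module.End A X', φ ≠ 0 → IsUnit φ) ∧
    ((Module.finrank F (Module.End A X') = 2) →
      ∀ φ : Module.End A X', ∃ c : F', ∀ x : X', φ x = c • x) := by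
  have : SMulCommClass F' A X' := .symm A F' X'
  have : Nontrivial X' := IsSimpleModule.nontrivial A X'
  have hunit (φ : Module.End A X') : φ ≠ 0 → IsUnit φ := (halg X' hirr φ).1
  have hφalg (φ : Module.End A X') : IsAlgebraic F φ := by
    obtain ⟨-, p, hp, hφp⟩ := halg X' hirr φ
    exact ⟨p, hp, p.sum_smul_pow_eq_aeval φ ▸ hφp⟩
  obtain ⟨α, hα⟩ := DFunLike.ne_iff.1 hτ
  have hα' := τ.toAlgHom.notMem_range_algebraMap_of_apply_ne hα
  set s := Algebra.lsmul F A X' (A := F')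
  have hC := intertwiners_lsmul_self_eq_range hquad habs hφalg hα'
  have hj := exists_unit_mem_intertwiners_lsmul_iff (A := A) (X := X') hquad τ.toAlgHom hα'
  by_cases hT : ∃ u : (Module.End A X')ˣ, ↑u ∈ intertwiners F (s α) (s (τ α))
  · obtain ⟨u, hu⟩ := hT
    have h4 := finrank_eq_four_of_unit_mem_intertwiners hquad s τ.toAlgHom hα hC u hu
    exact ⟨Or.inr h4, iff_of_true h4 (hj.1 ⟨u, hu⟩), fun _ => hunit, fun h2 => by omega⟩
  · have htop := range_eq_top_of_intertwiners_eq_bot hquad s τ.toAlgHom hα hC <|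
      (Submodule.eq_bot_iff _).2 fun d hd => by_contra fun h0 => hT ⟨(hunit d h0).unit, hd⟩
    have h2 : finrank F (Module.End A X') = 2 := by
      rw [← finrank_top, ← htop, LinearMap.finrank_range_of_inj
        (s : F' →+* Module.End A X').injective, hquad]
    refine ⟨Or.inl h2, ?_, by simp [h2], fun _ φ => ?_⟩
    · exact iff_of_false (by omega) (hT ∘ hj.2)
    · obtain ⟨c, hc⟩ := LinearMap.range_eq_top.1 htop φ
      exact ⟨c, fun x => by rw [← hc]; rfl⟩

/-- **Endomorphism algebras of irreducible restrictions along a quadratic extension.**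
Let `F'/F` be a quadratic extension with nontrivial automorphism `τ`, `A` an `F`-algebra and
`X'` an absolutely irreducible `A ⊗_F F'`-module; assume endomorphism rings of simple
`A`-modules are algebraic division algebras over `F`.  If the restriction of scalars
`Y = res_{F'/F} X'` is an irreducible `A`-module, then `End_A(Y)` is an `F`-algebra of
dimension `2` or `4` (it contains `F'`); its dimension is `4` exactly when `X'` is isomorphic
to its Galois conjugate `X̄' = X' ⊗_{F',τ} F'`, in which case `End_A(Y)` is a quaternion
division algebra over `F`, while otherwise `End_A(Y) = F'` consists of the `F'`-scalars. -/
theorem end_of_irreducible_restriction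
    (F F' : Type) [Field F] [Field F'] [Algebra F F']
    (hquad : Module.finrank F F' = 2)
    (τ : F' ≃ₐ[F] F') (hτ : τ ≠ AlgEquiv.refl)
    (A : Type) [Ring A] [Algebra F A]
    (X' : Type) [AddCommGroup X'] [Module F X'] [Module F' X'] [Module A X']
    [IsScalarTower F F' X'] [IsScalarTower F A X'] [SMulCommClass A F' X']
    [SMulCommClass F A X']
    (habs : IsAbsIrred F' A X')
    (halg : ∀ (M : Type) [AddCommGroup M] [Module F M] [Module A M],
      ∀ [IsScalarTower F A M] [SMulCommClass F A M],
      IsSimpleModule A M → ∀ φ : Module.End A M,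
        (φ ≠ 0 → IsUnit φ) ∧
        ∃ p : Polynomial F, p ≠ 0 ∧ p.sum (fun n c => c • φ ^ n) = 0)
    (hirr : IsSimpleModule A X') :
    (Module.finrank F (Module.End A X') = 2 ∨ Module.finrank F (Module.End A X') = 4) ∧
    ((Module.finrank F (Module.End A X') = 4) ↔
      ∃ j : X' ≃+ X', (∀ (c : F') (x : X'), j (c • x) = τ c • j x) ∧
        (∀ (a : A) (x : X'), j (a • x) = a • j x)) ∧
    ((Module.finrank F (Module.End A X') = 4) →
      ∀ φ : Module.End A X', φ ≠ 0 → IsUnit φ) ∧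
    ((Module.finrank F (Module.End A X') = 2) →
      ∀ φ : Module.End A X', ∃ c : F', ∀ x : X', φ x = c • x) :=
  end_of_irreducible_restriction_general F F' hquad τ hτ A X' habs halg hirr
end
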